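/- Assume the interaction graph G = (V, I) is acyclic and fix an edge {i,j} ∈ I. Then Pr(y = +1 | x_i = +1, x_j = +1) − Pr(y = −1 | x_i = +1, x_j = +1) = 2^{−(d−2)} · Σ_{x ∈ {−1,+1}^d : x_i = x_j = +1} ζ_{{i,j}}(x). -/

import Mathlib

open Finset

/-- The sigmoid function `σ(t) = eᵗ/(1+eᵗ)`. -/
noncomputable def sigmoid (t : ℝ) : ℝ := Real.exp t / (1 + Real.exp t)

/-- Interpretation of a Boolean as `±1 ∈ ℝ`. -/
def pm (b : Bool) : ℝ := if b then 1 else -1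

/-- `Σ_{{i,j}∈E} β_{{i,j}} x_i x_j`, summed over unordered pairs of distinct indices. -/
noncomputable def fld (d : ℕ) (β : Fin d → Fin d → ℝ) (x : Fin d → Bool) : ℝ :=
  ∑ i : Fin d, ∑ j ∈ Finset.Ioi i, β i j * pm (x i) * pm (x j)

/-- `Pr(y = s·(+1) | x_V ∈ A)`.  Since the covariates are i.i.d. uniform on `{−1,+1}`
and `Pr(y = s | x_V = x) = σ(s · Σ β x_i x_j)`, this conditional probability equals
`(Σ_{x∈A} σ(s · fld x)) / |A|`. -/
noncomputable def condProbY (d : ℕ) (β : Fin d → Fin d → ℝ) (s : ℝ)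
    (A : Finset (Fin d → Bool)) : ℝ :=
  (∑ x ∈ A, sigmoid (s * fld d β x)) / A.card

open scoped Classical in
/-- The influence `w_e = |2·Pr(y = +1 | x_i = +1, x_j = +1) − 1|` for `e = {i,j}`. -/
noncomputable def wgt (d : ℕ) (β : Fin d → Fin d → ℝ) (e : Sym2 (Fin d)) : ℝ :=
  |2 * condProbY d β 1 (Finset.univ.filter (fun x => ∀ v ∈ e, x v = true)) - 1|

/-- The interaction graph `G = (V, I)` with `I = {{i,j} : β_{{i,j}} ≠ 0}`. -/
def interGraph (d : ℕ) (β : Fin d → Fin d → ℝ) : SimpleGraph (Fin d) :=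
  SimpleGraph.fromRel (fun i j => β i j ≠ 0)

/-- `S_{{i,j}}(x) = Σ_{{k,l} ∈ E, {k,l} ≠ {i,j}} β_{{k,l}} x_k x_l`. -/
noncomputable def Sfun (d : ℕ) (β : Fin d → Fin d → ℝ) (i j : Fin d) (x : Fin d → Bool) : ℝ :=
  ∑ k : Fin d, ∑ l ∈ Finset.Ioi k,
    if s(k, l) = s(i, j) then 0 else β k l * pm (x k) * pm (x l)

/-- `ζ_{{i,j}}(x) = σ(β_{{i,j}} + S_{{i,j}}(x)) − σ(−β_{{i,j}} + S_{{i,j}}(x))`. -/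
noncomputable def zeta (d : ℕ) (β : Fin d → Fin d → ℝ) (i j : Fin d) (x : Fin d → Bool) : ℝ :=
  sigmoid (β i j + Sfun d β i j x) - sigmoid (-(β i j) + Sfun d β i j x)

/-!
On the event `x_i = x_j = +1` the field equals `β_ij + S_ij(x)`, so the claim reduces to
`Σ σ(-β_ij - S_ij(x)) = Σ σ(-β_ij + S_ij(x))` over that event. Every edge of a forest is a bridge,
so deleting `{i,j}` leaves a forest in which `i` and `j` lie in different components; it therefore
has a proper 2-colouring `c` with `c_i = c_j = false`. The flip `x ↦ x ⊕ c` preserves the event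
and negates every remaining interaction term, hence `S_ij`, and so matches the two sums.
-/

open SimpleGraph

lemma pm_xor (a b : Bool) : pm (xor a b) = -(pm a * pm b) := by
  cases a <;> cases b <;> norm_num [pm]

lemma pm_mul_pm_of_ne {a b : Bool} (h : a ≠ b) : pm a * pm b = -1 := by
  cases a <;> cases b <;> simp_all [pm]

lemma interGraph_adj {d : ℕ} {β : Fin d → Fin d → ℝ} {k l : Fin d} (hkl : k ≠ l)
    (hβ : β k l ≠ 0) : (interGraph d β).Adj k l :=
  (fromRel_adj _ _ _).2 ⟨hkl, .inl hβ⟩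

lemma Sym2.mk_eq_mk_iff_of_lt {α : Type*} [Preorder α] {a b k l : α} (hab : a < b)
    (hkl : k < l) :
    s(k, l) = s(a, b) ↔ k = a ∧ l = b := by
  rw [Sym2.eq_iff]
  refine ⟨?_, .inl⟩
  rintro (h | ⟨rfl, rfl⟩)
  · exact h
  · exact absurd (hab.trans hkl) (lt_irrefl _)

lemma sum_Ioi_ite_mk_eq {α M : Type*} [Fintype α] [LinearOrder α] [LocallyFiniteOrderTop α]
    [AddCommMonoid M] {a b : α} (hab : a < b) (f : α → α → M) :
    ∑ k, ∑ l ∈ Finset.Ioi k, (if s(k, l) = s(a, b) then f k l else 0) = f a b := by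
  calc ∑ k, ∑ l ∈ Finset.Ioi k, (if s(k, l) = s(a, b) then f k l else 0)
      = ∑ k, ∑ l ∈ Finset.Ioi k, (if k = a ∧ l = b then f k l else 0) :=
        sum_congr rfl fun k _ => sum_congr rfl fun l hl =>
          if_congr (Sym2.mk_eq_mk_iff_of_lt hab (mem_Ioi.1 hl)) rfl rfl
    _ = f a b := by simp [ite_and, hab]

lemma fld_eq_add_Sfun_of_lt {d : ℕ} (β : Fin d → Fin d → ℝ) {a b : Fin d} (hab : a < b)
    (x : Fin d → Bool) : fld d β x = β a b * pm (x a) * pm (x b) + Sfun d β a b x := by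
  rw [← sum_Ioi_ite_mk_eq hab (fun k l => β k l * pm (x k) * pm (x l)), fld, Sfun,
    ← sum_add_distrib]
  refine sum_congr rfl fun k _ => ?_
  rw [← sum_add_distrib]
  refine sum_congr rfl fun l _ => ?_
  split_ifs <;> simp

lemma Sfun_comm (d : ℕ) (β : Fin d → Fin d → ℝ) (i j : Fin d) :
    Sfun d β i j = Sfun d β j i := by
  funext x
  simp only [Sfun, Sym2.eq_swap (a := i)]

lemma fld_eq_add_Sfun {d : ℕ} {β : Fin d → Fin d → ℝ} (hsymm : ∀ i j, β i j = β j i)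
    {i j : Fin d} (hij : i ≠ j) (x : Fin d → Bool) :
    fld d β x = β i j * pm (x i) * pm (x j) + Sfun d β i j x := by
  rcases hij.lt_or_gt with h | h
  · exact fld_eq_add_Sfun_of_lt β h x
  · rw [fld_eq_add_Sfun_of_lt β h x, Sfun_comm, hsymm]
    ring

lemma Sfun_xor_coloring {d : ℕ} {β : Fin d → Fin d → ℝ} {i j : Fin d}
    (C : ((interGraph d β).deleteEdges {s(i, j)}).Coloring Bool) (x : Fin d → Bool) :
    Sfun d β i j (fun k => xor (x k) (C k)) = -Sfun d β i j x := by
  simp only [Sfun, ← sum_neg_distrib]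
  refine sum_congr rfl fun k _ => sum_congr rfl fun l hl => ?_
  split_ifs with hs
  · simp
  by_cases hβ : β k l = 0
  · simp [hβ]
  have hadj : ((interGraph d β).deleteEdges {s(i, j)}).Adj k l :=
    (deleteEdges_adj ..).2 ⟨interGraph_adj (mem_Ioi.1 hl).ne hβ, hs⟩
  rw [pm_xor, pm_xor]
  linear_combination β k l * pm (x k) * pm (x l) * pm_mul_pm_of_ne (C.valid hadj)

lemma exists_coloring_bool_eq_false_of_not_reachable {V : Type*} {G : SimpleGraph V}
    (hG : G.Colorable 2) {u v : V} (huv : ¬ G.Reachable u v) :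
    ∃ C : G.Coloring Bool, C u = false ∧ C v = false := by
  classical
  let C₀ : G.Coloring Bool := recolorOfEquiv G finTwoEquiv hG.some
  let flip (k : V) : Bool :=
    if G.connectedComponentMk k = G.connectedComponentMk u then C₀ u else C₀ v
  have hflip : ∀ ⦃k l⦄, G.Adj k l → flip k = flip l := fun k l h => by
    simp only [flip, ConnectedComponent.connectedComponentMk_eq_of_adj h]
  refine ⟨Coloring.mk (fun k => xor (C₀ k) (flip k)) fun {k l} h => ?_, ?_, ?_⟩
  · simpa [hflip h] using C₀.valid h
  · show xor (C₀ u) (flip u) = false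
    simp [flip]
  · show xor (C₀ v) (flip v) = false
    simp [flip, ConnectedComponent.eq, reachable_comm.not.1 huv]

lemma sum_filter_xor_eq {ι M : Type*} [Fintype ι] [DecidableEq ι] [AddCommMonoid M] {i j : ι}
    {c : ι → Bool} (hci : c i = false) (hcj : c j = false) (f : (ι → Bool) → M) :
    ∑ x ∈ univ.filter (fun x : ι → Bool => x i = true ∧ x j = true),
      f (fun k => xor (x k) (c k)) =
    ∑ x ∈ univ.filter (fun x : ι → Bool => x i = true ∧ x j = true), f x := by
  have hmem : ∀ x ∈ univ.filter (fun x : ι → Bool => x i = true ∧ x j = true),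
      (fun k => xor (x k) (c k)) ∈ univ.filter fun x : ι → Bool => x i = true ∧ x j = true :=
    fun x hx => by simpa [hci, hcj] using hx
  have hinv : ∀ x : ι → Bool, (fun k => xor (xor (x k) (c k)) (c k)) = x := fun x => by simp
  exact sum_nbij' _ _ hmem hmem (fun x _ => hinv x) (fun x _ => hinv x) (fun _ _ => rfl)

lemma card_filter_forall_mem_eq_true {ι : Type*} [Fintype ι] [DecidableEq ι] (s : Finset ι) :
    #(univ.filter fun x : ι → Bool => ∀ k ∈ s, x k = true) = 2 ^ (Fintype.card ι - #s) := by
  have hpi : univ.filter (fun x : ι → Bool => ∀ k ∈ s, x k = true) =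
      Fintype.piFinset fun k => if k ∈ s then {true} else univ := by
    ext x
    simp only [mem_filter, mem_univ, true_and, Fintype.mem_piFinset]
    refine forall_congr' fun k => ?_
    split_ifs with hk <;> simp [hk]
  rw [hpi, Fintype.card_piFinset, ← card_compl, ← prod_const, ← Fintype.prod_ite_mem sᶜ]
  refine prod_congr rfl fun k _ => ?_
  split_ifs <;> simp_all

lemma card_filter_eq_true_and_eq_true {ι : Type*} [Fintype ι] [DecidableEq ι] {i j : ι}
    (hij : i ≠ j) :
    #(univ.filter fun x : ι → Bool => x i = true ∧ x j = true) =
      2 ^ (Fintype.card ι - 2) := by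
  simpa [card_pair hij] using card_filter_forall_mem_eq_true {i, j}

theorem statement13_general (d : ℕ) (β : Fin d → Fin d → ℝ)
    (hsymm : ∀ i j, β i j = β j i)
    (hacyc : (interGraph d β).IsAcyclic)
    (i j : Fin d) (hij : i ≠ j) (hβ : β i j ≠ 0) :
    condProbY d β 1 (Finset.univ.filter (fun x => x i = true ∧ x j = true)) -
      condProbY d β (-1) (Finset.univ.filter (fun x => x i = true ∧ x j = true)) =
      (2 : ℝ) ^ (2 - (d : ℤ)) *
        ∑ x ∈ Finset.univ.filter (fun x : Fin d → Bool => x i = true ∧ x j = true),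
          zeta d β i j x := by
  set A := univ.filter (fun x : Fin d → Bool => x i = true ∧ x j = true)
  have hfld : ∀ x ∈ A, fld d β x = β i j + Sfun d β i j x := fun x hx => by
    obtain ⟨hxi, hxj⟩ := (mem_filter.1 hx).2
    simp [fld_eq_add_Sfun hsymm hij, hxi, hxj, pm]
  have hbridge : ¬ ((interGraph d β).deleteEdges {s(i, j)}).Reachable i j :=
    isBridge_iff.1 (isAcyclic_iff_forall_adj_isBridge.1 hacyc (interGraph_adj hij hβ))
  obtain ⟨C, hCi, hCj⟩ := exists_coloring_bool_eq_false_of_not_reachable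
    (hacyc.anti (deleteEdges_le _)).colorable_two hbridge
  have hpos : ∑ x ∈ A, sigmoid (1 * fld d β x) =
      ∑ x ∈ A, sigmoid (β i j + Sfun d β i j x) :=
    sum_congr rfl fun x hx => by rw [one_mul, hfld x hx]
  have hneg : ∑ x ∈ A, sigmoid (-1 * fld d β x) =
      ∑ x ∈ A, sigmoid (-(β i j) + Sfun d β i j x) := calc
    _ = ∑ x ∈ A, sigmoid (-(β i j) - Sfun d β i j x) :=
      sum_congr rfl fun x hx => by rw [hfld x hx]; ring_nf
    _ = ∑ x ∈ A, sigmoid (-(β i j) - Sfun d β i j (fun k => xor (x k) (C k))) :=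
      (sum_filter_xor_eq hCi hCj _).symm
    _ = _ := by simp only [Sfun_xor_coloring, sub_neg_eq_add]
  have hexp : (2 : ℤ) - d = -((d - 2 : ℕ) : ℤ) := by
    have := Fin.val_ne_iff.2 hij
    omega
  rw [condProbY, condProbY, hpos, hneg, ← sub_div, ← sum_sub_distrib,
    card_filter_eq_true_and_eq_true hij, Fintype.card_fin, hexp, zpow_neg, zpow_natCast,
    div_eq_inv_mul]
  push_cast
  rfl

/-- Lemma 2: if the interaction graph is acyclic and `{i,j} ∈ I`, then
`Pr(y=+1|x_i=+1,x_j=+1) − Pr(y=−1|x_i=+1,x_j=+1) = 2^{−(d−2)}·Σ_{x: x_i=x_j=+1} ζ_{{i,j}}(x)`. -/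
theorem statement13 (d : ℕ) (hd : 2 ≤ d) (β : Fin d → Fin d → ℝ)
    (hsymm : ∀ i j, β i j = β j i)
    (hacyc : (interGraph d β).IsAcyclic)
    (i j : Fin d) (hij : i ≠ j) (hβ : β i j ≠ 0) :
    condProbY d β 1 (Finset.univ.filter (fun x => x i = true ∧ x j = true)) -
      condProbY d β (-1) (Finset.univ.filter (fun x => x i = true ∧ x j = true)) =
      (2 : ℝ) ^ (2 - (d : ℤ)) *
        ∑ x ∈ Finset.univ.filter (fun x : Fin d → Bool => x i = true ∧ x j = true),
          zeta d β i j x :=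
  statement13_general d β hsymm hacyc i j hij hβ
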